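/- Let 𝓛/L/K be a tower of fields with 𝓛/K and L/K Galois extensions of the number field K, let T be a set of primes of K, and let A be a Gal(𝓛/K)-module such that A^{Gal(𝓛/L)} = A^{D_{𝔭,𝓛/L}} for every 𝔭 ∈ T, where D_{𝔭,𝓛/L} ⊆ Gal(𝓛/L) denotes a decomposition subgroup of 𝔭. Then the sequence 0 → Sha^1(L/K, T; A^{Gal(𝓛/L)}) → Sha^1(𝓛/K, T; A) → Sha^1(𝓛/L, T_L; A), given by inflation and restriction, is exact. -/

import Mathlib

open NumberField IsDedekindDomain

set_option synthInstance.maxHeartbeats 1000000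
set_option maxHeartbeats 4000000

noncomputable section

/-- A fixed algebraic closure of `K`, inside which all extensions of `K` are taken. -/
abbrev Om (K : Type) [Field K] : Type := AlgebraicClosure K

instance instNFIF (K : Type) [Field K] [NumberField K]
    (L : IntermediateField K (Om K)) [FiniteDimensional K ↥L] : NumberField ↥L :=
  { to_charZero := inferInstance
    to_finiteDimensional := Module.Finite.trans (R := ℚ) K ↥L }

/-- The primes (finite and infinite places) of a number field `F`. -/
def Plc (F : Type) [Field F] [NumberField F] : Type :=
  HeightOneSpectrum (𝓞 F) ⊕ InfinitePlace F

/-- `w` is a prime of `F` lying over the prime `v` of `E`, with respect to the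
embedding `f : E →+* F`. -/
def Plc.LiesOver {E F : Type} [Field E] [Field F] [NumberField E] [NumberField F]
    (f : E →+* F) (w : Plc F) (v : Plc E) : Prop :=
  match w, v with
  | .inl w, .inl v => w.asIdeal.comap (RingOfIntegers.mapRingHom f) = v.asIdeal
  | .inr w, .inr v => w.comap f = v
  | _, _ => False

/-- The pullback of a set of primes of `E` to `F`, along `f : E →+* F`:
the set of all primes of `F` lying over primes in `S`. -/
def pullPlc {E F : Type} [Field E] [Field F] [NumberField E] [NumberField F]
    (f : E →+* F) (S : Set (Plc E)) : Set (Plc F) :=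
  { w | ∃ v ∈ S, w.LiesOver f v }

/-- `S` has Dirichlet density `d`:  `(∑_{𝔭 ∈ S} N𝔭^{-s}) / (∑_𝔭 N𝔭^{-s}) → d` as `s → 1⁺`. -/
def HasDens (F : Type) [Field F] [NumberField F] (S : Set (Plc F)) (d : ℝ) : Prop :=
  Filter.Tendsto
    (fun s : ℝ =>
      (∑' v : {v : HeightOneSpectrum (𝓞 F) // Sum.inl v ∈ S}, ((v.1.asIdeal.absNorm : ℝ) ^ (-s))) /
      (∑' v : HeightOneSpectrum (𝓞 F), ((v.asIdeal.absNorm : ℝ) ^ (-s))))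
    (nhdsWithin 1 (Set.Ioi 1)) (nhds d)

variable {K : Type} [Field K] [NumberField K]

/-- The pullback of a set of primes of the base number field `K` to a finite extension
`L/K` inside `Om K`. -/
def pullK (S : Set (Plc K)) (L : IntermediateField K (Om K)) [FiniteDimensional K ↥L] :
    Set (Plc ↥L) :=
  pullPlc (algebraMap K ↥L) S
/- ## Galois groups as subgroups -/

variable (K) in
/-- The Galois group `Gal(M/L)` of `M/L` (for `L ≤ M`), realized as the subgroup of
`Gal(M/K) = (M ≃ₐ[K] M)` of automorphisms fixing (the elements of) `L` pointwise. -/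
def galSub (L M : IntermediateField K (Om K)) : Subgroup (↥M ≃ₐ[K] ↥M) where
  carrier := {σ | ∀ (x : Om K) (hxM : x ∈ M), x ∈ L → σ ⟨x, hxM⟩ = ⟨x, hxM⟩}
  one_mem' := fun _ _ _ => rfl
  mul_mem' := by
    intro σ τ hσ hτ x hxM hxL
    show σ (τ ⟨x, hxM⟩) = ⟨x, hxM⟩
    rw [hτ x hxM hxL, hσ x hxM hxL]
  inv_mem' := by
    intro σ hσ x hxM hxL
    show σ.symm ⟨x, hxM⟩ = ⟨x, hxM⟩
    rw [AlgEquiv.symm_apply_eq, hσ x hxM hxL]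
/- ## Continuous cochain cohomology in low degrees (coefficients in a discrete module) -/

section Cohomology

variable {G A : Type} [Group G] [TopologicalSpace G] [AddCommGroup A] [DistribMulAction G A]

/-- A continuous 1-cocycle (crossed homomorphism) of `G` with values in the discrete
module `A`. -/
def IsCocycle1 (f : G → A) : Prop :=
  (∀ a : A, IsOpen (f ⁻¹' {a})) ∧ ∀ g h : G, f (g * h) = f g + g • f h

/-- A 1-coboundary. -/
def IsCoboundary1 (f : G → A) : Prop :=
  ∃ a : A, ∀ g : G, f g = g • a - a

/-- Two 1-cochains are cohomologous. -/
def Cohomologous1 (f f' : G → A) : Prop :=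
  ∃ a : A, ∀ g : G, f g = f' g + (g • a - a)

/-- A continuous 2-cocycle of `G` with values in the discrete module `A`. -/
def IsCocycle2 (f : G → G → A) : Prop :=
  (∀ a : A, IsOpen {p : G × G | f p.1 p.2 = a}) ∧
    ∀ g h k : G, g • f h k - f (g * h) k + f g (h * k) - f g h = 0

/-- A continuous 2-coboundary. -/
def IsCoboundary2 (f : G → G → A) : Prop :=
  ∃ u : G → A, (∀ a : A, IsOpen (u ⁻¹' {a})) ∧ ∀ g h : G, f g h = g • u h - u (g * h) + u g

variable (G A) in
/-- The type of continuous 1-cocycles. -/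
def Cocycle1 : Type :=
  {f : G → A // IsCocycle1 f}

variable (G A) in
/-- The first continuous cohomology group `H¹(G, A)` (as a quotient set). -/
def H1 : Type :=
  Quot (fun f f' : Cocycle1 G A => Cohomologous1 f.1 f'.1)

variable (G A) in
/-- The zero cocycle. -/
def zeroCocycle1 : Cocycle1 G A :=
  ⟨fun _ => 0, by
    constructor
    · intro a
      classical
      rw [Set.preimage_const]
      split <;> simp
    · intro g h
      simp⟩

variable (G A) in
/-- The zero cohomology class. -/
def H1zero : H1 G A :=
  Quot.mk _ (zeroCocycle1 G A)

/-- The module `A` is discrete for the action of the topological group `G`, i.e. all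
stabilizers are open. -/
def SmoothAction (G A : Type) [Group G] [TopologicalSpace G] [AddCommGroup A]
    [DistribMulAction G A] : Prop :=
  ∀ a : A, IsOpen {g : G | g • a = a}

end Cohomology
/- ## Local Galois groups and local triviality of cohomology classes -/

/-- The completion of the number field `F` at the finite prime `w`. -/
abbrev locComp (F : Type) [Field F] [NumberField F] (w : HeightOneSpectrum (𝓞 F)) : Type :=
  w.adicCompletion F

/-- A fixed algebraic closure of the completion of `F` at `w`. -/
abbrev locCl (F : Type) [Field F] [NumberField F] (w : HeightOneSpectrum (𝓞 F)) : Type :=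
  AlgebraicClosure (locComp F w)

/-- The absolute Galois group of the completion of `F` at the finite prime `w`. -/
abbrev locGal (F : Type) [Field F] [NumberField F] (w : HeightOneSpectrum (𝓞 F)) : Type :=
  locCl F w ≃ₐ[locComp F w] locCl F w

/-- The canonical embedding of `F` into the algebraic closure of its completion at `w`. -/
def locEmb (F : Type) [Field F] [NumberField F] (w : HeightOneSpectrum (𝓞 F)) :
    F →+* locCl F w :=
  (algebraMap (locComp F w) (locCl F w)).comp (algebraMap F (locComp F w))

section LocalGlobal

variable {K : Type} [Field K] [NumberField K] {L Lx : IntermediateField K (Om K)}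

/-- `ι : Lx →+* locCl L w` is an embedding over the canonical embedding
`L → locComp L w → locCl L w`, i.e. a prolongation of the prime `w` to `Lx`. -/
def IsEmbAbove [FiniteDimensional K ↥L] (hL : L ≤ Lx) (w : HeightOneSpectrum (𝓞 ↥L))
    (ι : ↥Lx →+* locCl ↥L w) : Prop :=
  ∀ (x : Om K) (hx : x ∈ L), ι ⟨x, hL hx⟩ = locEmb ↥L w ⟨x, hx⟩

/-- `ρ` is the natural map from the local absolute Galois group at `w` to `Gal(Lx/L)`
induced by the prolongation `ι` (restriction of local automorphisms to `Lx`). -/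
def IsLocRes [FiniteDimensional K ↥L] (hL : L ≤ Lx) (w : HeightOneSpectrum (𝓞 ↥L))
    (ι : ↥Lx →+* locCl ↥L w) (ρ : locGal ↥L w →* ↥(galSub K L Lx)) : Prop :=
  ∀ (τ : locGal ↥L w) (x : ↥Lx), ι (((ρ τ : ↥Lx ≃ₐ[K] ↥Lx)) x) = τ (ι x)

/-- `j : Lx →+* ℂ` is a prolongation of the infinite place `w` of `L` to `Lx`. -/
def IsArchAbove [FiniteDimensional K ↥L] (hL : L ≤ Lx) (w : InfinitePlace ↥L)
    (j : ↥Lx →+* ℂ) : Prop :=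
  ∀ (x : Om K) (hx : x ∈ L), j ⟨x, hL hx⟩ = w.embedding ⟨x, hx⟩

/-- `σ ∈ Gal(Lx/L)` lies in the decomposition group of the prolongation `j` of an
archimedean place. -/
def InArchDec (hL : L ≤ Lx) (j : ↥Lx →+* ℂ) (σ : ↥(galSub K L Lx)) : Prop :=
  (∀ x : ↥Lx, j ((σ : ↥Lx ≃ₐ[K] ↥Lx) x) = j x) ∨
  (∀ x : ↥Lx, j ((σ : ↥Lx ≃ₐ[K] ↥Lx) x) = (starRingEnd ℂ) (j x))

variable (A : Type) [AddCommGroup A] [DistribMulAction (↥Lx ≃ₐ[K] ↥Lx) A]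

/-- The cohomology class of the `1`-cocycle `f` of `Gal(Lx/L)` is locally trivial at the
prime `w` of `L`, i.e. its restriction to `H¹(G_w, A)` vanishes (for every choice of a
prolongation of `w` and of the induced local restriction map). -/
def LocTriv1 [FiniteDimensional K ↥L] (hL : L ≤ Lx) (f : ↥(galSub K L Lx) → A)
    (w : Plc ↥L) : Prop :=
  match w with
  | .inl w => ∀ ι : ↥Lx →+* locCl ↥L w, IsEmbAbove hL w ι →
      ∀ ρ : locGal ↥L w →* ↥(galSub K L Lx), IsLocRes hL w ι ρ →
        ∃ a : A, ∀ τ : locGal ↥L w, f (ρ τ) = ((ρ τ : ↥Lx ≃ₐ[K] ↥Lx)) • a - a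
  | .inr w => ∀ j : ↥Lx →+* ℂ, IsArchAbove hL w j →
      ∃ a : A, ∀ σ : ↥(galSub K L Lx), InArchDec hL j σ →
        f σ = ((σ : ↥Lx ≃ₐ[K] ↥Lx)) • a - a

/-- The cohomology class of the `2`-cocycle `f` of `Gal(Lx/L)` is locally trivial at the
prime `w` of `L`. -/
def LocTriv2 [FiniteDimensional K ↥L] (hL : L ≤ Lx) (f : ↥(galSub K L Lx) → ↥(galSub K L Lx) → A)
    (w : Plc ↥L) : Prop :=
  match w with
  | .inl w => ∀ ι : ↥Lx →+* locCl ↥L w, IsEmbAbove hL w ι →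
      ∀ ρ : locGal ↥L w →* ↥(galSub K L Lx), IsLocRes hL w ι ρ →
        ∃ u : locGal ↥L w → A, (∀ a : A, IsOpen (u ⁻¹' {a})) ∧
          ∀ τ τ' : locGal ↥L w,
            f (ρ τ) (ρ τ') = ((ρ τ : ↥Lx ≃ₐ[K] ↥Lx)) • u τ' - u (τ * τ') + u τ
  | .inr w => ∀ j : ↥Lx →+* ℂ, IsArchAbove hL w j →
      ∃ u : ↥(galSub K L Lx) → A,
        ∀ σ σ' : ↥(galSub K L Lx), InArchDec hL j σ → InArchDec hL j σ' →
          f σ σ' = ((σ : ↥Lx ≃ₐ[K] ↥Lx)) • u σ' - u (σ * σ') + u σ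

end LocalGlobal
/- ## Local triviality over the base field `K` -/

section BaseK

variable {K : Type} [Field K] [NumberField K] {Lx : IntermediateField K (Om K)}

/-- `ι` is a prolongation, to `Lx`, of the canonical embedding of `K` into the algebraic
closure of its completion at the finite prime `v`. -/
def IsEmbAboveK (v : HeightOneSpectrum (𝓞 K)) (ι : ↥Lx →+* locCl K v) : Prop :=
  ∀ x : K, ι (algebraMap K ↥Lx x) = locEmb K v x

/-- `ρ` is the restriction map from the local absolute Galois group at `v` to `Gal(Lx/K)`
induced by `ι`. -/
def IsLocResK (v : HeightOneSpectrum (𝓞 K)) (ι : ↥Lx →+* locCl K v)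
    (ρ : locGal K v →* (↥Lx ≃ₐ[K] ↥Lx)) : Prop :=
  ∀ (τ : locGal K v) (x : ↥Lx), ι (ρ τ x) = τ (ι x)

/-- `j` is a prolongation of the archimedean place `w` of `K` to `Lx`. -/
def IsArchAboveK (w : InfinitePlace K) (j : ↥Lx →+* ℂ) : Prop :=
  ∀ x : K, j (algebraMap K ↥Lx x) = w.embedding x

/-- `σ` lies in the decomposition group of the archimedean prolongation `j`. -/
def InArchDecK (j : ↥Lx →+* ℂ) (σ : ↥Lx ≃ₐ[K] ↥Lx) : Prop :=
  (∀ x : ↥Lx, j (σ x) = j x) ∨ (∀ x : ↥Lx, j (σ x) = (starRingEnd ℂ) (j x))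

variable (A : Type) [AddCommGroup A] [DistribMulAction (↥Lx ≃ₐ[K] ↥Lx) A]

/-- The `1`-cocycle `f` of `Gal(Lx/K)` is locally trivial at the prime `v` of `K`, with a
local potential lying in the subset `B ⊆ A` (take `B = Set.univ` for coefficients `A`;
taking for `B` a submodule expresses local triviality with coefficients in it). -/
def LocTriv1K (f : (↥Lx ≃ₐ[K] ↥Lx) → A) (B : Set A) (v : Plc K) : Prop :=
  match v with
  | .inl v => ∀ ι : ↥Lx →+* locCl K v, IsEmbAboveK v ι →
      ∀ ρ : locGal K v →* (↥Lx ≃ₐ[K] ↥Lx), IsLocResK v ι ρ →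
        ∃ a ∈ B, ∀ τ : locGal K v, f (ρ τ) = ρ τ • a - a
  | .inr w => ∀ j : ↥Lx →+* ℂ, IsArchAboveK w j →
      ∃ a ∈ B, ∀ σ : ↥Lx ≃ₐ[K] ↥Lx, InArchDecK j σ → f σ = σ • a - a

end BaseK
section Statement11

variable (K : Type) [Field K] [NumberField K]
variable (Lx L : IntermediateField K (Om K))

/-- `τ` (an element of the local absolute Galois group) fixes the image of `L` under the
prolongation `ι`; the subgroup of such `τ` is the local absolute Galois group of the
induced prime of `L`. -/
def FixesLFin (hL : L ≤ Lx) {v : HeightOneSpectrum (𝓞 K)} (ι : ↥Lx →+* locCl K v)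
    (τ : locGal K v) : Prop :=
  ∀ (x : Om K) (hx : x ∈ L), τ (ι ⟨x, hL hx⟩) = ι ⟨x, hL hx⟩

variable (A : Type) [AddCommGroup A] [DistribMulAction (↥Lx ≃ₐ[K] ↥Lx) A]

/-- The submodule `A^{Gal(Lx/L)}` of invariants. -/
def fixedPtsN (hL : L ≤ Lx) : Set A :=
  {a | ∀ σ ∈ galSub K L Lx, σ • a = a}

/-- Membership in `Ш¹(L/K, T; A^{Gal(Lx/L)})`, on the level of cocycles of `Gal(Lx/K)`:
an inflated cocycle, i.e. one vanishing on `Gal(Lx/L)` and taking values in the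
invariants, which is locally trivial at `T` with potentials in the invariants. -/
def InShaX (hL : L ≤ Lx) (T : Set (Plc K)) (f : (↥Lx ≃ₐ[K] ↥Lx) → A) : Prop :=
  IsCocycle1 f ∧ (∀ σ ∈ galSub K L Lx, f σ = 0) ∧ (∀ g, f g ∈ fixedPtsN K Lx L A hL) ∧
    ∀ v ∈ T, LocTriv1K A f (fixedPtsN K Lx L A hL) v

/-- Membership in `Ш¹(Lx/K, T; A)`, on the level of cocycles of `Gal(Lx/K)`. -/
def InShaY (T : Set (Plc K)) (f : (↥Lx ≃ₐ[K] ↥Lx) → A) : Prop :=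
  IsCocycle1 f ∧ ∀ v ∈ T, LocTriv1K A f Set.univ v

/-- The restriction of `f` to `Gal(Lx/L)` is locally trivial at all primes of `L` above
`T` (membership of the restricted class in `Ш¹(Lx/L, T_L; A)`). -/
def RestrictionInShaZ (hL : L ≤ Lx) (T : Set (Plc K)) (f : (↥Lx ≃ₐ[K] ↥Lx) → A) : Prop :=
  ∀ v ∈ T,
    (∀ vf : HeightOneSpectrum (𝓞 K), v = Sum.inl vf →
      ∀ ι : ↥Lx →+* locCl K vf, IsEmbAboveK vf ι →
        ∀ ρ : locGal K vf →* (↥Lx ≃ₐ[K] ↥Lx), IsLocResK vf ι ρ →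
          ∃ a : A, ∀ τ : locGal K vf, FixesLFin K Lx L hL ι τ → f (ρ τ) = ρ τ • a - a) ∧
    (∀ w : InfinitePlace K, v = Sum.inr w →
      ∀ j : ↥Lx →+* ℂ, IsArchAboveK w j →
        ∃ a : A, ∀ σ : ↥Lx ≃ₐ[K] ↥Lx, σ ∈ galSub K L Lx → InArchDecK j σ →
          f σ = σ • a - a)

variable {K Lx L A}

section CocycleLemmas

variable {G M : Type} [Group G] [AddCommGroup M] [DistribMulAction G M]

open scoped Pointwise in
theorem SmoothAction.isLocallyConstant_smul [TopologicalSpace G] [ContinuousConstSMul G G]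
    (hM : SmoothAction G M) (m : M) : IsLocallyConstant fun g : G => g • m := by
  refine (IsLocallyConstant.iff_exists_open _).2 fun g₀ =>
    ⟨g₀ • {g | g • m = m}, (hM m).smul g₀, ⟨1, one_smul G m, mul_one g₀⟩, ?_⟩
  rintro _ ⟨g, hg, rfl⟩
  exact (mul_smul g₀ g m).trans (congrArg _ hg)

theorem IsCocycle1.sub_coboundary [TopologicalSpace G] [ContinuousConstSMul G G]
    (hM : SmoothAction G M) {f : G → M} (hf : IsCocycle1 f) (m : M) :
    IsCocycle1 fun g => f g - (g • m - m) := by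
  refine ⟨IsLocallyConstant.iff_isOpen_fiber.1 ?_, fun g h => ?_⟩
  · exact (IsLocallyConstant.iff_isOpen_fiber.2 hf.1).sub
      ((hM.isLocallyConstant_smul m).sub (IsLocallyConstant.const m))
  · dsimp only
    rw [hf.2, mul_smul, smul_sub, smul_sub]
    abel

theorem smul_eq_of_cocycle_eq_zero_on_normal {f : G → M}
    (hf : ∀ g h, f (g * h) = f g + g • f h) {N : Subgroup G} (hN : N.Normal)
    (hfN : ∀ σ ∈ N, f σ = 0) (g : G) {σ : G} (hσ : σ ∈ N) : σ • f g = f g := by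
  have hconj : g⁻¹ * σ * g ∈ N := by simpa using hN.conj_mem σ hσ g⁻¹
  calc σ • f g = f (σ * g) := by rw [hf, hfN σ hσ, zero_add]
    _ = f (g * (g⁻¹ * σ * g)) := by group
    _ = f g := by rw [hf, hfN _ hconj, smul_zero, add_zero]

end CocycleLemmas

omit [NumberField K] in
theorem coe_algEquiv_apply_mem [Normal K L] (hL : L ≤ Lx) (g : Lx ≃ₐ[K] Lx) {x : Om K}
    (hx : x ∈ L) : ((g ⟨x, hL hx⟩ : Lx) : Om K) ∈ L := by
  rw [← AlgHom.fieldRange_of_normal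
    (Lx.val.comp (g.toAlgHom.comp (IntermediateField.inclusion hL)))]
  exact ⟨⟨x, hx⟩, rfl⟩

omit [NumberField K] in
theorem galSub_normal [Normal K L] (hL : L ≤ Lx) : (galSub K L Lx).Normal := by
  refine ⟨fun σ hσ g x hxM hxL => ?_⟩
  have hfix : σ (g⁻¹ ⟨x, hxM⟩) = g⁻¹ ⟨x, hxM⟩ :=
    hσ _ (g⁻¹ ⟨x, hxM⟩).2 (coe_algEquiv_apply_mem hL g⁻¹ hxL)
  show g (σ (g⁻¹ ⟨x, hxM⟩)) = ⟨x, hxM⟩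
  rw [hfix]
  exact g.apply_symm_apply _

theorem IsLocResK.mem_galSub {v : HeightOneSpectrum (𝓞 K)} {ι : Lx →+* locCl K v}
    {ρ : locGal K v →* (Lx ≃ₐ[K] Lx)} (hρ : IsLocResK v ι ρ) (hL : L ≤ Lx) {τ : locGal K v}
    (hτ : FixesLFin K Lx L hL ι τ) : ρ τ ∈ galSub K L Lx := fun x hxM hxL =>
  ι.injective ((hρ τ ⟨x, hxM⟩).trans (hτ x hxL))

theorem LocTriv1K.mono {f : (Lx ≃ₐ[K] Lx) → A} {B C : Set A} (hBC : B ⊆ C) :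
    ∀ {v : Plc K}, LocTriv1K A f B v → LocTriv1K A f C v
  | .inl _, hf => fun ι hι ρ hρ =>
      let ⟨b, hb, hfb⟩ := hf ι hι ρ hρ
      ⟨b, hBC hb, hfb⟩
  | .inr _, hf => fun j hj =>
      let ⟨b, hb, hfb⟩ := hf j hj
      ⟨b, hBC hb, hfb⟩

theorem LocTriv1K.sub_coboundary {f : (Lx ≃ₐ[K] Lx) → A} (a : A) :
    ∀ {v : Plc K}, LocTriv1K A f Set.univ v →
      LocTriv1K A (fun g => f g - (g • a - a)) Set.univ v
  | .inl _, hf => fun ι hι ρ hρ =>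
      let ⟨b, _, hfb⟩ := hf ι hι ρ hρ
      ⟨b - a, trivial, fun τ => by dsimp only; rw [hfb, smul_sub]; abel⟩
  | .inr _, hf => fun j hj =>
      let ⟨b, _, hfb⟩ := hf j hj
      ⟨b - a, trivial, fun σ hσ => by dsimp only; rw [hfb σ hσ, smul_sub]; abel⟩

variable (K Lx L A) in
/-- At the prime `v` of `K`, every element of `A` fixed by the decomposition groups
`D_{𝔭,Lx/L}` of the primes `𝔭 ∣ v` of `L` is fixed by all of `Gal(Lx/L)`. -/
def DecompInvariantsFixed (hL : L ≤ Lx) (v : Plc K) : Prop :=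
  (∀ vf : HeightOneSpectrum (𝓞 K), v = Sum.inl vf →
    ∀ ι : ↥Lx →+* locCl K vf, IsEmbAboveK vf ι →
      ∀ ρ : locGal K vf →* (↥Lx ≃ₐ[K] ↥Lx), IsLocResK vf ι ρ →
        ∀ a : A, (∀ τ : locGal K vf, FixesLFin K Lx L hL ι τ → ρ τ • a = a) →
          a ∈ fixedPtsN K Lx L A hL) ∧
  (∀ w : InfinitePlace K, v = Sum.inr w →
    ∀ j : ↥Lx →+* ℂ, IsArchAboveK w j →
      ∀ a : A, (∀ σ : ↥Lx ≃ₐ[K] ↥Lx, σ ∈ galSub K L Lx → InArchDecK j σ → σ • a = a) →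
        a ∈ fixedPtsN K Lx L A hL)

/-- A local potential `b` of a cocycle vanishing on `Gal(Lx/L)` is fixed by the
decomposition groups over `L`, since `σ • b - b = f σ = 0` there. -/
theorem LocTriv1K.fixedPtsN_of_eq_zero {hL : L ≤ Lx} {f : (Lx ≃ₐ[K] Lx) → A}
    (hfN : ∀ σ ∈ galSub K L Lx, f σ = 0) :
    ∀ {v : Plc K}, DecompInvariantsFixed K Lx L A hL v → LocTriv1K A f Set.univ v →
      LocTriv1K A f (fixedPtsN K Lx L A hL) v
  | .inl vf, hD, hf => fun ι hι ρ hρ =>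
      let ⟨b, _, hfb⟩ := hf ι hι ρ hρ
      ⟨b, hD.1 vf rfl ι hι ρ hρ b fun τ hτ =>
        sub_eq_zero.1 ((hfb τ).symm.trans (hfN _ (hρ.mem_galSub hL hτ))), hfb⟩
  | .inr w, hD, hf => fun j hj =>
      let ⟨b, _, hfb⟩ := hf j hj
      ⟨b, hD.2 w rfl j hj b fun σ hσN hσ =>
        sub_eq_zero.1 ((hfb σ hσ).symm.trans (hfN σ hσN)), hfb⟩

theorem InShaX.mem_fixedPtsN_of_coboundary {hL : L ≤ Lx} {T : Set (Plc K)}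
    {f : (Lx ≃ₐ[K] Lx) → A} (hf : InShaX K Lx L A hL T f) {a : A}
    (ha : ∀ g, f g = g • a - a) : a ∈ fixedPtsN K Lx L A hL := fun σ hσ =>
  sub_eq_zero.1 ((ha σ).symm.trans (hf.2.1 σ hσ))

theorem InShaX.inShaY {hL : L ≤ Lx} {T : Set (Plc K)} {f : (Lx ≃ₐ[K] Lx) → A}
    (hf : InShaX K Lx L A hL T f) : InShaY K Lx A T f :=
  ⟨hf.1, fun v hv => (hf.2.2.2 v hv).mono (Set.subset_univ _)⟩

theorem InShaY.restrictionInShaZ (hL : L ≤ Lx) {T : Set (Plc K)} {f : (Lx ≃ₐ[K] Lx) → A}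
    (hf : InShaY K Lx A T f) : RestrictionInShaZ K Lx L A hL T f := by
  intro v hv
  refine ⟨?_, ?_⟩
  · rintro vf rfl ι hι ρ hρ
    obtain ⟨b, -, hfb⟩ := hf.2 _ hv ι hι ρ hρ
    exact ⟨b, fun τ _ => hfb τ⟩
  · rintro w rfl j hj
    obtain ⟨b, -, hfb⟩ := hf.2 _ hv j hj
    exact ⟨b, fun σ _ hσ => hfb σ hσ⟩

theorem InShaY.inShaX_sub_coboundary [Normal K L] (hL : L ≤ Lx)
    (hA : SmoothAction (Lx ≃ₐ[K] Lx) A) {T : Set (Plc K)}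
    (hD : ∀ v ∈ T, DecompInvariantsFixed K Lx L A hL v) {f : (Lx ≃ₐ[K] Lx) → A}
    (hf : InShaY K Lx A T f) {a : A} (ha : ∀ σ ∈ galSub K L Lx, f σ = σ • a - a) :
    InShaX K Lx L A hL T fun g => f g - (g • a - a) := by
  have hcoc := hf.1.sub_coboundary hA a
  have hfN : ∀ σ ∈ galSub K L Lx, f σ - (σ • a - a) = 0 := fun σ hσ => by
    rw [ha σ hσ, sub_self]
  exact ⟨hcoc, hfN,
    fun g σ hσ => smul_eq_of_cocycle_eq_zero_on_normal hcoc.2 (galSub_normal hL) hfN g hσ,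
    fun v hv => LocTriv1K.fixedPtsN_of_eq_zero hfN (hD v hv) ((hf.2 v hv).sub_coboundary a)⟩

variable (K Lx L A)

theorem statement_11 [IsGalois K ↥L] (hL : L ≤ Lx)
    [AddCommGroup A] [DistribMulAction (↥Lx ≃ₐ[K] ↥Lx) A]
    (hA : SmoothAction (↥Lx ≃ₐ[K] ↥Lx) A)
    (T : Set (Plc K))
    -- the hypothesis `A^{Gal(Lx/L)} = A^{D_{𝔭,Lx/L}}` for all `𝔭 ∈ T`:
    (hD : ∀ v ∈ T,
      (∀ vf : HeightOneSpectrum (𝓞 K), v = Sum.inl vf →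
        ∀ ι : ↥Lx →+* locCl K vf, IsEmbAboveK vf ι →
          ∀ ρ : locGal K vf →* (↥Lx ≃ₐ[K] ↥Lx), IsLocResK vf ι ρ →
            ∀ a : A, (∀ τ : locGal K vf, FixesLFin K Lx L hL ι τ → ρ τ • a = a) →
              a ∈ fixedPtsN K Lx L A hL) ∧
      (∀ w : InfinitePlace K, v = Sum.inr w →
        ∀ j : ↥Lx →+* ℂ, IsArchAboveK w j →
          ∀ a : A, (∀ σ : ↥Lx ≃ₐ[K] ↥Lx, σ ∈ galSub K L Lx → InArchDecK j σ → σ • a = a) →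
            a ∈ fixedPtsN K Lx L A hL)) :
    -- injectivity of the inflation map on Shafarevich groups:
    (∀ f : (↥Lx ≃ₐ[K] ↥Lx) → A, InShaX K Lx L A hL T f → IsCoboundary1 f →
      ∃ a ∈ fixedPtsN K Lx L A hL, ∀ g : ↥Lx ≃ₐ[K] ↥Lx, f g = g • a - a) ∧
    -- the inflation of a class of `Ш¹(L/K, T; A^N)` lies in `Ш¹(Lx/K, T; A)`:
    (∀ f, InShaX K Lx L A hL T f → InShaY K Lx A T f) ∧
    -- the restriction of a class of `Ш¹(Lx/K, T; A)` lies in `Ш¹(Lx/L, T_L; A)`: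
    (∀ f, InShaY K Lx A T f → RestrictionInShaZ K Lx L A hL T f) ∧
    -- exactness in the middle:
    (∀ f, InShaY K Lx A T f →
      (∃ a : A, ∀ σ : ↥Lx ≃ₐ[K] ↥Lx, σ ∈ galSub K L Lx → f σ = σ • a - a) →
      ∃ f' : (↥Lx ≃ₐ[K] ↥Lx) → A, Cohomologous1 f f' ∧ InShaX K Lx L A hL T f') := by
  refine ⟨fun f hf ⟨a, ha⟩ => ⟨a, hf.mem_fixedPtsN_of_coboundary ha, ha⟩,
    fun f hf => hf.inShaY, fun f hf => hf.restrictionInShaZ hL, ?_⟩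
  rintro f hf ⟨a, ha⟩
  exact ⟨_, ⟨a, fun g => (sub_add_cancel _ _).symm⟩, hf.inShaX_sub_coboundary hL hA hD ha⟩

end Statement11
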